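/- arXiv:2210.11355 — 3 statements merged into one kernel-verified Lean document; each statement's English description precedes it below -/
import Mathlib

section
/- Let T₀, T₁, I be positive integers, X ∈ ℝ^{T₀×I}, W ∈ ℝ^{T₁×I}, λ ∈ ℝ^{I}, and z = X·λ ∈ ℝ^{T₀}. Assume rowspace(W) ⊆ rowspace(X), and let G ∈ ℝ^{I×T₀} be any generalized inverse of X, i.e., a matrix satisfying X·G·X = X (in particular, the Moore–Penrose pseudoinverse is one). Then W·G·z = W·λ; consequently, for every vector w ∈ ℝ^{T₁}, wᵀ·W·G·z = wᵀ·W·λ. -/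
open Matrix

/-- The row space of a real matrix: the linear span of its rows. -/
def rowSpace {m n : Type*} (M : Matrix m n ℝ) : Submodule ℝ (n → ℝ) :=
  Submodule.span ℝ (Set.range M)

/-!
Subspace inclusion writes `W = A·X` for some matrix `A`, so for any generalized inverse `G`
of `X` we get `W·G·X = A·(X·G·X) = A·X = W`; applied to `λ`, with `z = X·λ`, this is
`W·G·z = W·λ`.
-/

theorem exists_eq_mul_of_rowSpace_le {k m n : Type*} [Fintype m] {W : Matrix k n ℝ}
    {X : Matrix m n ℝ} (h : rowSpace W ≤ rowSpace X) : ∃ A : Matrix k m ℝ, W = A * X := by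
  have hrow (i : k) : W i ∈ LinearMap.range X.vecMulLinear := by
    rw [range_vecMulLinear]
    exact h (Submodule.subset_span ⟨i, rfl⟩)
  choose A hA using hrow
  exact ⟨Matrix.of A, funext fun i => (hA i).symm⟩

theorem mul_mul_eq_of_rowSpace_le {k m n : Type*} [Fintype m] [Fintype n] {W : Matrix k n ℝ}
    {X : Matrix m n ℝ} {G : Matrix n m ℝ} (hrow : rowSpace W ≤ rowSpace X)
    (hG : X * G * X = X) : W * G * X = W := by
  obtain ⟨A, rfl⟩ := exists_eq_mul_of_rowSpace_le hrow
  rw [Matrix.mul_assoc A X G, Matrix.mul_assoc A (X * G) X, hG]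

theorem stmt0_general {T₀ T₁ I : ℕ}
    (X : Matrix (Fin T₀) (Fin I) ℝ) (W : Matrix (Fin T₁) (Fin I) ℝ)
    (lam : Fin I → ℝ) (z : Fin T₀ → ℝ) (hz : z = X.mulVec lam)
    (hrow : rowSpace W ≤ rowSpace X)
    (G : Matrix (Fin I) (Fin T₀) ℝ) (hG : X * G * X = X) :
    W.mulVec (G.mulVec z) = W.mulVec lam ∧
      ∀ w : Fin T₁ → ℝ, w ⬝ᵥ W.mulVec (G.mulVec z) = w ⬝ᵥ W.mulVec lam := by
  have hWGz : W.mulVec (G.mulVec z) = W.mulVec lam := by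
    rw [hz, mulVec_mulVec, mulVec_mulVec, mul_mul_eq_of_rowSpace_le hrow hG]
  exact ⟨hWGz, fun w => by rw [hWGz]⟩

/-- Identification formula, Theorem 1 of the paper.
If `z = X·λ`, `rowspace(W) ⊆ rowspace(X)`, and `G` is any generalized inverse of `X`
(i.e. `X·G·X = X`), then `W·G·z = W·λ`, and hence `wᵀ·W·G·z = wᵀ·W·λ` for every `w`. -/
theorem stmt0 {T₀ T₁ I : ℕ} (hT₀ : 0 < T₀) (hT₁ : 0 < T₁) (hI : 0 < I)
    (X : Matrix (Fin T₀) (Fin I) ℝ) (W : Matrix (Fin T₁) (Fin I) ℝ)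
    (lam : Fin I → ℝ) (z : Fin T₀ → ℝ) (hz : z = X.mulVec lam)
    (hrow : rowSpace W ≤ rowSpace X)
    (G : Matrix (Fin I) (Fin T₀) ℝ) (hG : X * G * X = X) :
    W.mulVec (G.mulVec z) = W.mulVec lam ∧
      ∀ w : Fin T₁ → ℝ, w ⬝ᵥ W.mulVec (G.mulVec z) = w ⬝ᵥ W.mulVec lam :=
  stmt0_general X W lam z hz hrow G hG
end

section
/- Fix integers D ≥ 2, K ≥ 1, T̄ ≥ 1; set T' = ⌈K/(D−1)⌉ and T_pre = T'·T̄. For a color k ∈ {0,…,K−1} let block(k) = ⌊k/(D−1)⌋ and res(k) = k mod (D−1). Given a coloring c : {1,…,N} → {0,…,K−1}, define treatments A(i,t) ∈ {1,…,D} for t ∈ {1,…,T_pre} by: A(i,t) = res(c(i)) + 2 if block(c(i)) equals the period index ⌊(t−1)/T̄⌋, and A(i,t) = 1 otherwise. Define the indicator matrix B ∈ {0,1}^{N×(T_pre·D)} by B[i,(t,a)] = 1 if and only if A(i,t) = a. Then for every subset S ⊆ {1,…,N} of units whose colors are pairwise distinct, the rows of B indexed by S are linearly independent over ℝ; i.e.,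 B[S,:] has full row rank |S|. -/
/-!
Each unit `i` of color `k` owns the coordinate `(t, a)` where `t` is the first measurement of
block `⌊k/(D-1)⌋` and `a` is its treatment `k mod (D-1) + 2` there. At that coordinate the row of
`i` is `1`, and the row of a unit of another color is `0`: units outside the block take the
control, units inside it with a different residue take a different treatment. Restricted to
these coordinates the rows of `S` form a diagonal matrix with nonzero diagonal.
-/

theorem linearIndependent_of_isolatingCoord {ι α R : Type*} [Ring R] [NoZeroDivisors R]
    {v : ι → α → R} (p : ι → α) (hself : ∀ i, v i (p i) ≠ 0)
    (hother : ∀ i j, j ≠ i → v j (p i) = 0) : LinearIndependent R v := by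
  rw [linearIndependent_iff']
  intro s g hsum i hi
  have hcoord := congrFun hsum (p i)
  simp only [Finset.sum_apply, Pi.smul_apply, smul_eq_mul, Pi.zero_apply] at hcoord
  rw [Finset.sum_eq_single_of_mem i hi fun j _ hji => by rw [hother i j hji, mul_zero]] at hcoord
  exact (mul_eq_zero.mp hcoord).resolve_right (hself i)

theorem Nat.le_ceil_div_mul (n : ℕ) {d : ℕ} (hd : 0 < d) : n ≤ ⌈(n : ℝ) / d⌉₊ * d := by
  have hd' : (0 : ℝ) < d := by exact_mod_cast hd
  exact_mod_cast (div_le_iff₀ hd').mp (Nat.le_ceil ((n : ℝ) / d))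

/-- The treatment `A(i, t)` of a unit of color `k`, with `d = D - 1` non-control treatments. -/
def designTreatment (d Tbar k t : ℕ) : ℕ :=
  if k / d = t / Tbar then k % d + 2 else 1

theorem designTreatment_blockStart_eq_iff {d Tbar : ℕ} (hTbar : 0 < Tbar) (k k' : ℕ) :
    designTreatment d Tbar k' (k / d * Tbar) = k % d + 2 ↔ k' = k := by
  rw [designTreatment, Nat.mul_div_cancel _ hTbar]
  constructor
  · intro h
    split_ifs at h with hblock
    · exact Nat.ext_div_modEq hblock (by simpa [Nat.ModEq] using h)
    · omega
  · rintro rfl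
    simp

theorem stmt9_general {D K N Tbar : ℕ} (hD : 2 ≤ D) (hTbar : 1 ≤ Tbar)
    (T' Tpre : ℕ) (hT' : T' = ⌈(K : ℝ) / ((D : ℝ) - 1)⌉₊) (hTpre : Tpre = T' * Tbar)
    (c : Fin N → Fin K)
    (A : Fin N → Fin Tpre → ℕ)
    (hA : ∀ i t, A i t =
      if (c i : ℕ) / (D - 1) = (t : ℕ) / Tbar then (c i : ℕ) % (D - 1) + 2 else 1)
    (B : Fin N → Fin Tpre × Fin D → ℝ)
    (hB : ∀ i p, B i p = if A i p.1 = (p.2 : ℕ) + 1 then 1 else 0)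
    (S : Finset (Fin N)) (hS : Set.InjOn c S) :
    LinearIndependent ℝ (fun i : S => B i) := by
  have hd : 0 < D - 1 := by omega
  have hK : K ≤ T' * (D - 1) := by
    rw [hT', ← Nat.cast_pred (by omega)]
    exact Nat.le_ceil_div_mul K hd
  have hblock (i : Fin N) : (c i : ℕ) / (D - 1) * Tbar < Tpre := by
    rw [hTpre]
    exact Nat.mul_lt_mul_of_pos_right ((Nat.div_lt_iff_lt_mul hd).mpr ((c i).2.trans_le hK)) hTbar
  have hres (i : Fin N) : (c i : ℕ) % (D - 1) + 1 < D := by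
    have := Nat.mod_lt (c i : ℕ) hd
    omega
  let p (i : Fin N) : Fin Tpre × Fin D := (⟨_, hblock i⟩, ⟨_, hres i⟩)
  have hA' (j : Fin N) (t : Fin Tpre) : A j t = designTreatment (D - 1) Tbar (c j) t := hA j t
  have hBp (i j : Fin N) : B j (p i) = if c j = c i then 1 else 0 := by
    simp only [hB, hA', p, add_assoc, Nat.reduceAdd, designTreatment_blockStart_eq_iff hTbar,
      Fin.val_inj]
  refine linearIndependent_of_isolatingCoord (fun i : S => p i) (fun i => ?_) fun i j hji => ?_
  · simp [hBp]
  · rw [hBp, if_neg fun hc => hji (Subtype.ext (hS j.2 i.2 hc))]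

/-- core of Lemma 1 of the paper: the experiment design passes the
first requirement of the `TrainingTreatmentTest`.
Under the coloring-based design with `D ≥ 2` treatments, `K ≥ 1` colors,
block length `T̄ ≥ 1`, `T' = ⌈K/(D−1)⌉` periods and `T_pre = T'·T̄` training measurements
(indexed here by `t : Fin T_pre`, zero-based, so the period of `t` is `⌊t/T̄⌋`),
the `0/1`-indicator rows `B i = (𝟙{A(i,t) = a})_{(t,a)}` of any set `S` of units with
pairwise distinct colors are linearly independent over `ℝ`. -/
theorem stmt9 {D K N Tbar : ℕ} (hD : 2 ≤ D) (hK : 1 ≤ K) (hTbar : 1 ≤ Tbar)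
    (T' Tpre : ℕ) (hT' : T' = ⌈(K : ℝ) / ((D : ℝ) - 1)⌉₊) (hTpre : Tpre = T' * Tbar)
    (c : Fin N → Fin K)
    (A : Fin N → Fin Tpre → ℕ)
    (hA : ∀ i t, A i t =
      if (c i : ℕ) / (D - 1) = (t : ℕ) / Tbar then (c i : ℕ) % (D - 1) + 2 else 1)
    (B : Fin N → Fin Tpre × Fin D → ℝ)
    (hB : ∀ i p, B i p = if A i p.1 = (p.2 : ℕ) + 1 then 1 else 0)
    (S : Finset (Fin N)) (hS : Set.InjOn c S) :
    LinearIndependent ℝ (fun i : S => B i) :=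
  stmt9_general hD hTbar T' Tpre hT' hTpre c A hA B hB S hS
end

section
/- Let H_pre ∈ ℝ^{p×m} and H_post ∈ ℝ^{q×m} satisfy rowspace(H_post) ⊆ rowspace(H_pre); let r ≥ 1 be an integer, let W_pre ∈ ℝ^{T₀×rp} be a matrix with linearly independent columns, and let W_post ∈ ℝ^{T₁×rq} be arbitrary. Then rowspace(W_post·(H_post ⊗ I_r)) ⊆ rowspace(W_pre·(H_pre ⊗ I_r)). -/
/-! Writing `H_post = C * H_pre`, the Kronecker identity
`(C * H_pre) ⊗ I = (C ⊗ I) * (H_pre ⊗ I)` and a left inverse `L` of `W_pre` give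
`W_post (H_post ⊗ I) = (W_post (C ⊗ I) L) * (W_pre (H_pre ⊗ I))`, and the rows of a product
lie in the row space of its right factor. -/

open Matrix Kronecker

theorem Matrix.exists_mul_eq_one_of_linearIndependent_col {K m n : Type*} [Field K]
    [Fintype m] [Fintype n] [DecidableEq n] {W : Matrix m n K}
    (hW : LinearIndependent K W.col) : ∃ L : Matrix n m K, L * W = 1 := by
  classical
  obtain ⟨g, hg⟩ := (toLin' W).exists_leftInverse_of_injective
    (LinearMap.ker_eq_bot.mpr (mulVec_injective_iff.mpr hW))
  refine ⟨LinearMap.toMatrix' g, ?_⟩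
  rw [← LinearMap.toMatrix'_toLin' W, ← LinearMap.toMatrix'_comp, hg, LinearMap.toMatrix'_id]

section rowSpace

variable {a b c : Type*}

theorem mem_rowSpace_iff_exists_vecMul [Fintype b] {v : c → ℝ} {B : Matrix b c ℝ} :
    v ∈ rowSpace B ↔ ∃ x, x ᵥ* B = v := by
  rw [rowSpace, show Set.range B = Set.range B.row from rfl, ← range_vecMulLinear]
  rfl

theorem rowSpace_mul_le [Fintype b] (A : Matrix a b ℝ) (B : Matrix b c ℝ) :
    rowSpace (A * B) ≤ rowSpace B := by
  rw [rowSpace, Submodule.span_le]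
  rintro _ ⟨i, rfl⟩
  exact mem_rowSpace_iff_exists_vecMul.mpr ⟨A i, rfl⟩

theorem exists_mul_eq_of_rowSpace_le [Fintype b] {A : Matrix a c ℝ} {B : Matrix b c ℝ}
    (h : rowSpace A ≤ rowSpace B) : ∃ C : Matrix a b ℝ, A = C * B := by
  choose C hC using fun i ↦
    mem_rowSpace_iff_exists_vecMul.mp (h (Submodule.subset_span ⟨i, rfl⟩))
  exact ⟨Matrix.of C, Matrix.ext fun i j ↦ by rw [mul_apply_eq_vecMul, ← hC]; rfl⟩

theorem rowSpace_le_rowSpace_mul_of_mul_eq_one [Fintype a] [Fintype b] [DecidableEq b]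
    {W : Matrix a b ℝ} {L : Matrix b a ℝ} (hL : L * W = 1) (M : Matrix b c ℝ) :
    rowSpace M ≤ rowSpace (W * M) := by
  simpa only [← Matrix.mul_assoc, hL, Matrix.one_mul] using rowSpace_mul_le L (W * M)

theorem rowSpace_kronecker_le_of_rowSpace_le {e f : Type*} [Fintype b] [Fintype e]
    [DecidableEq e] {A : Matrix a c ℝ} {B : Matrix b c ℝ} (h : rowSpace A ≤ rowSpace B)
    (K : Matrix e f ℝ) : rowSpace (A ⊗ₖ K) ≤ rowSpace (B ⊗ₖ K) := by
  obtain ⟨C, rfl⟩ := exists_mul_eq_of_rowSpace_le h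
  rw [← Matrix.one_mul K, mul_kronecker_mul, Matrix.one_mul]
  exact rowSpace_mul_le _ _

end rowSpace

theorem stmt11_general {p q m r T₀ T₁ : ℕ}
    (Hpre : Matrix (Fin p) (Fin m) ℝ) (Hpost : Matrix (Fin q) (Fin m) ℝ)
    (hH : rowSpace Hpost ≤ rowSpace Hpre)
    (Wpre : Matrix (Fin T₀) (Fin p × Fin r) ℝ)
    (hW : LinearIndependent ℝ Wpreᵀ)
    (Wpost : Matrix (Fin T₁) (Fin q × Fin r) ℝ) :
    rowSpace (Wpost * (Hpost ⊗ₖ (1 : Matrix (Fin r) (Fin r) ℝ))) ≤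
      rowSpace (Wpre * (Hpre ⊗ₖ (1 : Matrix (Fin r) (Fin r) ℝ))) := by
  obtain ⟨L, hL⟩ := exists_mul_eq_one_of_linearIndependent_col hW
  calc rowSpace (Wpost * (Hpost ⊗ₖ (1 : Matrix (Fin r) (Fin r) ℝ)))
      ≤ rowSpace (Hpost ⊗ₖ (1 : Matrix (Fin r) (Fin r) ℝ)) := rowSpace_mul_le _ _
    _ ≤ rowSpace (Hpre ⊗ₖ (1 : Matrix (Fin r) (Fin r) ℝ)) :=
        rowSpace_kronecker_le_of_rowSpace_le hH _
    _ ≤ rowSpace (Wpre * (Hpre ⊗ₖ (1 : Matrix (Fin r) (Fin r) ℝ))) :=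
        rowSpace_le_rowSpace_mul_of_mul_eq_one hL _

/-- deterministic core of Proposition 2 of the paper.
If `rowspace(H_post) ⊆ rowspace(H_pre)`, `W_pre` has linearly independent columns
(equivalently, the rows of `W_preᵀ` are linearly independent), and `W_post` is
arbitrary, then `rowspace(W_post·(H_post ⊗ I_r)) ⊆ rowspace(W_pre·(H_pre ⊗ I_r))`. -/
theorem stmt11 {p q m r T₀ T₁ : ℕ} (hr : 1 ≤ r)
    (Hpre : Matrix (Fin p) (Fin m) ℝ) (Hpost : Matrix (Fin q) (Fin m) ℝ)
    (hH : rowSpace Hpost ≤ rowSpace Hpre)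
    (Wpre : Matrix (Fin T₀) (Fin p × Fin r) ℝ)
    (hW : LinearIndependent ℝ Wpreᵀ)
    (Wpost : Matrix (Fin T₁) (Fin q × Fin r) ℝ) :
    rowSpace (Wpost * (Hpost ⊗ₖ (1 : Matrix (Fin r) (Fin r) ℝ))) ≤
      rowSpace (Wpre * (Hpre ⊗ₖ (1 : Matrix (Fin r) (Fin r) ℝ))) :=
  stmt11_general Hpre Hpost hH Wpre hW Wpost
end
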